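/- arXiv:2412.16560 — 3 statements merged into one kernel-verified Lean document; each statement's English description precedes it below -/
import Mathlib

section
/- For every non-empty word u over a nonempty finite alphabet A, ρ(u) equals the maximum, taken over all factorizations u = v₁·a·v₂ with a a letter, of r(v₁,a) + ℓ(a,v₂) + 1. -/
/-- Simon's congruence of order `k`: `u` and `v` have the same subwords
(subsequences) of length at most `k`. -/
def SimonCong {A : Type*} (k : ℕ) (u v : List A) : Prop :=
  ∀ s : List A, s.length ≤ k → (s.Sublist u ↔ s.Sublist v)

/-- The subword distance `δ(u,v) = sup {k | u ∼ₖ v} ∈ ℕ ∪ {∞}`. -/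
noncomputable def delta {A : Type*} (u v : List A) : ℕ∞ :=
  ⨆ k ∈ {k : ℕ | SimonCong k u v}, (k : ℕ∞)

/-- Right side distance `r(u,t) = δ(u, u·t)`. -/
noncomputable def sideR {A : Type*} (u t : List A) : ℕ∞ :=
  delta u (u ++ t)

/-- Left side distance `ℓ(t,u) = δ(t·u, u)`. -/
noncomputable def sideL {A : Type*} (t u : List A) : ℕ∞ :=
  delta (t ++ u) u

/-- The piecewise complexity `h(u)`: the least `n` such that every word
`v` with `u ∼ₙ v` equals `u`. -/
noncomputable def pieceH {A : Type*} (u : List A) : ℕ :=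
  sInf {n : ℕ | ∀ v : List A, SimonCong n u v → v = u}

/-- A word `u` is `m`-reduced if no strict subword of `u` is `∼ₘ`-equivalent to `u`. -/
def MReduced {A : Type*} (m : ℕ) (u : List A) : Prop :=
  ∀ u' : List A, u'.Sublist u → u' ≠ u → ¬ SimonCong m u' u

/-- The piecewise minimality index `ρ(u)`: the least `m` such that `u` is `m`-reduced. -/
noncomputable def rho {A : Type*} (u : List A) : ℕ :=
  sInf {m : ℕ | MReduced m u}
/-!
Deleting one letter from `u = v₁ a v₂` costs exactly `δ(v₁v₂, u) = r(v₁,a) + ℓ(a,v₂)`.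
A subword `x a t` of `u` of length at most `r + ℓ` either has `|x a| ≤ r`, so that `x a` already
embeds into `v₁`, or `|a t| ≤ ℓ`, so that `a t` embeds into `v₂`; conversely, witnesses
`t₁ ⊑ v₁` with `t₁ a ⋢ v₁` and `t₂ ⊑ v₂` with `a t₂ ⋢ v₂` give `t₁ a t₂ ⊑ u` but `t₁ a t₂ ⋢ v₁v₂`.
Every strict subword of `u` lies below some `v₁v₂`, and `∼ₘ`-equivalence with `u` passes from a
subword to everything between it and `u`, so `u` is `m`-reduced iff `δ(v₁v₂, u) < m` for all
factorizations; `ρ(u)` is the least such `m`.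
-/

section

variable {A : Type*}

namespace SimonCong

theorem mono {k k' : ℕ} {u v : List A} (h : k' ≤ k) (hc : SimonCong k u v) :
    SimonCong k' u v :=
  fun s hs => hc s (hs.trans h)

theorem zero (u v : List A) : SimonCong 0 u v := by
  intro s hs
  rw [List.eq_nil_of_length_eq_zero (Nat.le_zero.mp hs)]
  simp

theorem eq_of_length_le {k : ℕ} {u v : List A} (hc : SimonCong k u v)
    (hu : u.length ≤ k) (hv : v.length ≤ k) : u = v :=
  ((hc u hu).mp (List.Sublist.refl u)).antisymm ((hc v hv).mpr (List.Sublist.refl v))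

theorem of_sublist_of_sublist {k : ℕ} {u' w u : List A} (hc : SimonCong k u' u)
    (hu' : u'.Sublist w) (hw : w.Sublist u) : SimonCong k w u :=
  fun s hs => ⟨fun h => h.trans hw, fun h => ((hc s hs).mpr h).trans hu'⟩

end SimonCong

theorem simonCong_iff_le_delta {k : ℕ} {u v : List A} :
    SimonCong k u v ↔ (k : ℕ∞) ≤ delta u v := by
  refine ⟨fun hc => le_iSup₂ (f := fun (j : ℕ) (_ : SimonCong j u v) => (j : ℕ∞)) k hc,
    fun hk => ?_⟩
  cases k with
  | zero => exact SimonCong.zero u v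
  | succ n =>
    obtain ⟨j, hj, hnj⟩ := lt_biSup_iff.mp ((Nat.cast_lt.mpr n.lt_succ_self).trans_le hk)
    exact hj.mono (Nat.cast_lt.mp hnj)

theorem delta_ne_top {u v : List A} (h : u ≠ v) : delta u v ≠ ⊤ := fun htop =>
  h ((simonCong_iff_le_delta.mpr (htop ▸ le_top)).eq_of_length_le
    (k := u.length + v.length) (Nat.le_add_right _ _) (Nat.le_add_left _ _))

section Insertion

variable {v v₁ v₂ : List A} {a : A} {r l : ℕ}

theorem append_sublist_append_cons (v₁ : List A) (a : A) (v₂ : List A) :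
    (v₁ ++ v₂).Sublist (v₁ ++ a :: v₂) :=
  (List.sublist_cons_self a v₂).append_left v₁

theorem simonCong_append_cons (hr : SimonCong r v₁ (v₁ ++ [a]))
    (hl : SimonCong l (a :: v₂) v₂) : SimonCong (r + l) (v₁ ++ v₂) (v₁ ++ a :: v₂) := by
  intro s hs
  refine ⟨fun h => h.trans (append_sublist_append_cons v₁ a v₂), fun h => ?_⟩
  obtain ⟨x, y, rfl, hx, hy⟩ := List.sublist_append_iff.mp h
  rcases List.sublist_cons_iff.mp hy with hy | ⟨t, rfl, ht⟩
  · exact hx.append hy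
  rw [List.length_append, List.length_cons] at hs
  by_cases hxr : x.length + 1 ≤ r
  · have hxa : (x ++ [a]).Sublist v₁ :=
      (hr (x ++ [a]) (by simpa using hxr)).mpr (hx.append (List.Sublist.refl [a]))
    simpa using hxa.append ht
  · have hat : (a :: t).Sublist v₂ := (hl (a :: t) (by simp; omega)).mp (ht.cons_cons a)
    exact hx.append hat

theorem exists_sublist_not_append_singleton_sublist
    (h : ¬ SimonCong (r + 1) v (v ++ [a])) :
    ∃ t : List A, t.length ≤ r ∧ t.Sublist v ∧ ¬ (t ++ [a]).Sublist v := by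
  obtain ⟨s, hs, hsv⟩ : ∃ s : List A, s.length ≤ r + 1 ∧ ¬ (s.Sublist v ↔ s.Sublist (v ++ [a])) :=
    by simpa [SimonCong] using h
  have hsa : s.Sublist (v ++ [a]) ∧ ¬ s.Sublist v := by
    by_cases hs' : s.Sublist v
    · exact absurd (iff_of_true hs' (hs'.trans (List.sublist_append_left v [a]))) hsv
    · exact ⟨by tauto, hs'⟩
  obtain ⟨t, y, rfl, ht, hy⟩ := List.sublist_append_iff.mp hsa.1
  rcases List.sublist_singleton.mp hy with rfl | rfl
  · exact absurd (by simpa using ht) hsa.2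
  · exact ⟨t, by simpa using hs, ht, hsa.2⟩

theorem exists_sublist_not_cons_sublist (h : ¬ SimonCong (l + 1) (a :: v) v) :
    ∃ t : List A, t.length ≤ l ∧ t.Sublist v ∧ ¬ (a :: t).Sublist v := by
  obtain ⟨s, hs, hsv⟩ : ∃ s : List A, s.length ≤ l + 1 ∧ ¬ (s.Sublist (a :: v) ↔ s.Sublist v) :=
    by simpa [SimonCong] using h
  have hsa : s.Sublist (a :: v) ∧ ¬ s.Sublist v := by
    by_cases hs' : s.Sublist v
    · exact absurd (iff_of_true (hs'.trans (List.sublist_cons_self a v)) hs') hsv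
    · exact ⟨by tauto, hs'⟩
  rcases List.sublist_cons_iff.mp hsa.1 with hsv' | ⟨t, rfl, ht⟩
  · exact absurd hsv' hsa.2
  · exact ⟨t, by simpa using hs, ht, hsa.2⟩

theorem not_append_cons_sublist {t₁ t₂ : List A} (h₁ : ¬ (t₁ ++ [a]).Sublist v₁)
    (h₂ : ¬ (a :: t₂).Sublist v₂) : ¬ (t₁ ++ a :: t₂).Sublist (v₁ ++ v₂) := by
  intro h
  obtain ⟨x, y, hxy, hx, hy⟩ := List.sublist_append_iff.mp h
  rcases List.append_eq_append_iff.mp hxy.symm with ⟨w, rfl, rfl⟩ | ⟨w, rfl, hw⟩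
  · exact h₂ ((List.sublist_append_right w _).trans hy)
  · rcases w with _ | ⟨c, w⟩
    · rw [List.nil_append] at hw
      exact h₂ (hw ▸ hy)
    · obtain ⟨rfl, -⟩ := List.cons.inj hw
      exact h₁ (((List.nil_sublist w).cons_cons a).append_left t₁ |>.trans hx)

theorem not_simonCong_append_cons (hr : ¬ SimonCong (r + 1) v₁ (v₁ ++ [a]))
    (hl : ¬ SimonCong (l + 1) (a :: v₂) v₂) :
    ¬ SimonCong (r + l + 1) (v₁ ++ v₂) (v₁ ++ a :: v₂) := by
  obtain ⟨t₁, ht₁, hv₁, hnot₁⟩ := exists_sublist_not_append_singleton_sublist hr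
  obtain ⟨t₂, ht₂, hv₂, hnot₂⟩ := exists_sublist_not_cons_sublist hl
  intro hc
  refine not_append_cons_sublist hnot₁ hnot₂ ((hc _ ?_).mpr (hv₁.append (hv₂.cons_cons a)))
  simp only [List.length_append, List.length_cons]
  omega

theorem delta_append_cons (v₁ : List A) (a : A) (v₂ : List A) :
    delta (v₁ ++ v₂) (v₁ ++ a :: v₂) = sideR v₁ [a] + sideL [a] v₂ := by
  lift sideR v₁ [a] to ℕ using delta_ne_top (by simp) with r hr
  lift sideL [a] v₂ to ℕ using delta_ne_top (by simp) with l hl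
  have hcr : ∀ k, SimonCong k v₁ (v₁ ++ [a]) ↔ k ≤ r := fun k => by
    rw [simonCong_iff_le_delta, ← sideR, ← hr, Nat.cast_le]
  have hcl : ∀ k, SimonCong k (a :: v₂) v₂ ↔ k ≤ l := fun k => by
    rw [simonCong_iff_le_delta, ← List.singleton_append, ← sideL, ← hl, Nat.cast_le]
  apply le_antisymm
  · by_contra! hlt
    refine not_simonCong_append_cons (r := r) (l := l) (fun h => by have := (hcr _).mp h; omega)
      (fun h => by have := (hcl _).mp h; omega)
      (simonCong_iff_le_delta.mpr ?_)
    exact_mod_cast (ENat.add_one_le_iff (by simp)).mpr hlt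
  · exact_mod_cast simonCong_iff_le_delta.mp
      (simonCong_append_cons ((hcr r).mpr le_rfl) ((hcl l).mpr le_rfl))

end Insertion

theorem List.Sublist.exists_eq_append_cons_sublist {u' u : List A} (h : u'.Sublist u)
    (hne : u' ≠ u) : ∃ v₁ a v₂, u = v₁ ++ a :: v₂ ∧ u'.Sublist (v₁ ++ v₂) := by
  induction h with
  | slnil => exact absurd rfl hne
  | @cons l₁ l₂ a h _ => exact ⟨[], a, l₂, rfl, h⟩
  | @cons_cons l₁ l₂ a _ ih =>
    obtain ⟨v₁, b, v₂, rfl, hsub⟩ := ih (fun he => hne (he ▸ rfl))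
    exact ⟨a :: v₁, b, v₂, rfl, hsub.cons_cons a⟩

theorem mReduced_iff_forall_append_cons {m : ℕ} {u : List A} :
    MReduced m u ↔ ∀ v₁ a v₂, u = v₁ ++ a :: v₂ → ¬ SimonCong m (v₁ ++ v₂) u := by
  refine ⟨fun hred v₁ a v₂ hu => hred _ ?_ (by simp [hu]), fun h u' hu' hne hc => ?_⟩
  · exact hu ▸ append_sublist_append_cons v₁ a v₂
  · obtain ⟨v₁, a, v₂, hu, hsub⟩ := hu'.exists_eq_append_cons_sublist hne
    exact h v₁ a v₂ hu (hc.of_sublist_of_sublist hsub (hu ▸ append_sublist_append_cons v₁ a v₂))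

theorem mReduced_iff_iSup_le {m : ℕ} {u : List A} :
    MReduced m u ↔ (⨆ p : {p : List A × A × List A // u = p.1 ++ p.2.1 :: p.2.2},
        sideR p.val.1 [p.val.2.1] + sideL [p.val.2.1] p.val.2.2 + 1) ≤ m := by
  simp only [mReduced_iff_forall_append_cons, iSup_le_iff, Subtype.forall, Prod.forall]
  refine forall₃_congr fun v₁ a v₂ => forall_congr' fun hu => ?_
  rw [← delta_append_cons, ← hu, simonCong_iff_le_delta, not_le,
    ENat.add_one_le_iff (delta_ne_top (by simp [hu]))]

theorem mReduced_length (u : List A) : MReduced u.length u :=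
  fun _ hsub hne hc => hne (hsub.antisymm ((hc u le_rfl).mpr (List.Sublist.refl u)))

end

theorem stmt3_general {A : Type*} (u : List A) :
    (rho u : ℕ∞) =
      ⨆ p : {p : List A × A × List A // u = p.1 ++ p.2.1 :: p.2.2},
        sideR p.val.1 [p.val.2.1] + sideL [p.val.2.1] p.val.2.2 + 1 := by
  obtain ⟨s, hs⟩ := ENat.ne_top_iff_exists.mp <| ne_top_of_le_ne_top (ENat.natCast_ne_top _)
    (mReduced_iff_iSup_le.mp (mReduced_length u))
  have hred : {m : ℕ | MReduced m u} = Set.Ici s := by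
    ext m
    change MReduced m u ↔ s ≤ m
    rw [mReduced_iff_iSup_le, ← hs, Nat.cast_le]
  rw [rho, hred, csInf_Ici, hs]

theorem stmt3 {A : Type*} [Fintype A] [Nonempty A] (u : List A) (hu : u ≠ []) :
    (rho u : ℕ∞) =
      ⨆ p : {p : List A × A × List A // u = p.1 ++ p.2.1 :: p.2.2},
        sideR p.val.1 [p.val.2.1] + sideL [p.val.2.1] p.val.2.2 + 1 :=
  stmt3_general u
end

section
/- For all words u, t over a nonempty finite alphabet A and every letter a: (R1) r(u,t) = min{r(u,a) | a a letter occurring in t} (with the convention that the minimum over the empty set is ∞, so r(u,ε) = ∞); (R2) if a does not occur in u then r(u,a) = 0; (R3) if u = u'·a·u'' with a not occurring in u'', then r(u,a) = 1 + r(u', a·u''). -/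
/-!
Since `n ≤ δ(u, v)` holds exactly when `u ∼ₙ v`, everything is a statement about Simon's
congruence, and as `u ⊑ u·t`, the relation `u ∼ₙ u·t` says that every subword of `u·t` of length
at most `n` is already a subword of `u`. For (R1), induct on `t` from the right: a new subword
`s·c` of `u·t·c` with `s ⊑ u` is a subword of `u·c`, hence of `u` once `u ∼ₙ u·c`. For (R3), the
final `a` of a subword `s·a` of `u = u'·a·u''` must embed into or before the displayed `a`, so
`s·a ⊑ u` iff `s ⊑ u'`; hence `u ∼ₖ₊₁ u·a` iff `u' ∼ₖ u'·a·u''`.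
-/

namespace List

variable {α : Type*}

theorem sublist_of_append_singleton_sublist {s x y : List α} {a : α} (ha : a ∉ y)
    (h : s ++ [a] <+ x ++ a :: y) : s <+ x := by
  obtain ⟨r₁, r₂, hxy, hs, har⟩ := append_sublist_iff.mp h
  rcases append_eq_append_iff.mp hxy with ⟨a', rfl, hy⟩ | ⟨c', rfl, -⟩
  · cases a' with
    | nil => simpa using hs
    | cons b a' =>
      obtain ⟨-, rfl⟩ := cons_eq_cons.mp hy
      exact absurd (mem_append_right a' (singleton_sublist.mp har)) ha
  · exact hs.trans (sublist_append_left _ _)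

end List

open scoped List

section SimonCong

variable {A : Type*}

theorem simonCong_zero (u v : List A) : SimonCong 0 u v := by
  intro s hs
  rw [List.eq_nil_of_length_eq_zero (Nat.le_zero.mp hs)]
  simp

theorem SimonCong.mono_s4 {j k : ℕ} {u v : List A} (hc : SimonCong k u v) (h : j ≤ k) :
    SimonCong j u v := fun s hs => hc s (hs.trans h)

theorem simonCong_append_iff {k : ℕ} {u t : List A} :
    SimonCong k u (u ++ t) ↔ ∀ s : List A, s.length ≤ k → s <+ u ++ t → s <+ u :=
  ⟨fun h s hs => (h s hs).mpr,
    fun h s hs => ⟨fun hsub => hsub.trans (List.sublist_append_left u t), h s hs⟩⟩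

theorem simonCong_append_iff_forall_mem {k : ℕ} {u t : List A} :
    SimonCong k u (u ++ t) ↔ ∀ b ∈ t, SimonCong k u (u ++ [b]) := by
  refine ⟨fun h b hb => ?_, fun H => ?_⟩
  · rw [simonCong_append_iff] at h ⊢
    exact fun s hs hsub =>
      h s hs (hsub.trans ((List.Sublist.refl u).append (List.singleton_sublist.mpr hb)))
  rw [simonCong_append_iff]
  induction t using List.reverseRecOn with
  | nil => simp
  | append_singleton t c ih =>
    intro s hs hsub
    rw [← List.append_assoc, List.sublist_append_iff] at hsub
    obtain ⟨s', l, rfl, hs', hl⟩ := hsub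
    have hs'u : s' <+ u :=
      ih (fun b hb => H b (List.mem_append_left _ hb)) s' (by simp at hs; omega) hs'
    rcases List.sublist_singleton.mp hl with rfl | rfl
    · simpa using hs'u
    · exact simonCong_append_iff.mp (H c (by simp)) _ hs (hs'u.append (List.Sublist.refl _))

theorem simonCong_succ_append_singleton_iff {k : ℕ} {x y : List A} {a : A} (ha : a ∉ y) :
    SimonCong (k + 1) (x ++ a :: y) (x ++ a :: y ++ [a]) ↔ SimonCong k x (x ++ a :: y) := by
  rw [simonCong_append_iff, simonCong_append_iff]
  refine ⟨fun h s hs hsub => ?_, fun h s hs hsub => ?_⟩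
  · refine List.sublist_of_append_singleton_sublist ha (h _ ?_ ?_)
    · simpa using hs
    · exact hsub.append (List.Sublist.refl [a])
  · obtain ⟨s', l, rfl, hs', hl⟩ := List.sublist_append_iff.mp hsub
    rcases List.sublist_singleton.mp hl with rfl | rfl
    · simpa using hs'
    · have hs'x : s' <+ x := h s' (by simp at hs; omega) hs'
      exact hs'x.append (List.singleton_sublist.mpr List.mem_cons_self)

end SimonCong

section SideDistance

variable {A : Type*}

theorem natCast_le_delta_iff {n : ℕ} {u v : List A} :
    (n : ℕ∞) ≤ delta u v ↔ SimonCong n u v := by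
  refine ⟨fun h => ?_, fun h => le_biSup (fun k : ℕ => (k : ℕ∞)) h⟩
  cases n with
  | zero => exact simonCong_zero u v
  | succ n =>
    have hlt : (n : ℕ∞) < delta u v := (Nat.cast_lt.mpr n.lt_succ_self).trans_le h
    obtain ⟨k, hk, hnk⟩ := lt_biSup_iff.mp hlt
    exact hk.mono_s4 (by exact_mod_cast hnk)

theorem natCast_le_sideR_iff {n : ℕ} {u t : List A} :
    (n : ℕ∞) ≤ sideR u t ↔ SimonCong n u (u ++ t) :=
  natCast_le_delta_iff

theorem sideR_eq_iInf_sideR_singleton (u t : List A) :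
    sideR u t = ⨅ b ∈ {b : A | b ∈ t}, sideR u [b] := by
  refine ENat.eq_of_forall_natCast_le_iff fun n => ?_
  simp only [le_iInf₂_iff, natCast_le_sideR_iff, Set.mem_ofPred_eq]
  exact simonCong_append_iff_forall_mem

theorem sideR_singleton_eq_zero {u : List A} {a : A} (ha : a ∉ u) : sideR u [a] = 0 := by
  rw [← Order.lt_one_iff, lt_iff_not_ge, ← Nat.cast_one, natCast_le_sideR_iff]
  intro h
  exact ha (List.singleton_sublist.mp ((h [a] le_rfl).mpr (List.sublist_append_right u [a])))

theorem sideR_singleton_eq_one_add {u' u'' : List A} {a : A} (ha : a ∉ u'') :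
    sideR (u' ++ a :: u'') [a] = 1 + sideR u' (a :: u'') := by
  refine ENat.eq_of_forall_natCast_le_iff fun n => ?_
  cases n with
  | zero => simp
  | succ k =>
    rw [natCast_le_sideR_iff, simonCong_succ_append_singleton_iff ha, ← natCast_le_sideR_iff,
      Nat.cast_succ, add_comm (1 : ℕ∞), ENat.add_le_add_iff_right ENat.one_ne_top]

end SideDistance

theorem stmt4_general {A : Type*} (u t : List A) (a : A) :
    (sideR u t = ⨅ b ∈ {b : A | b ∈ t}, sideR u [b]) ∧
    (a ∉ u → sideR u [a] = 0) ∧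
    (∀ u' u'' : List A, u = u' ++ a :: u'' → a ∉ u'' →
      sideR u [a] = 1 + sideR u' (a :: u'')) :=
  ⟨sideR_eq_iInf_sideR_singleton u t, sideR_singleton_eq_zero,
    fun _ _ hu ha => hu ▸ sideR_singleton_eq_one_add ha⟩

theorem stmt4 {A : Type*} [Fintype A] [Nonempty A] (u t : List A) (a : A) :
    (sideR u t = ⨅ b ∈ {b : A | b ∈ t}, sideR u [b]) ∧
    (a ∉ u → sideR u [a] = 0) ∧
    (∀ u' u'' : List A, u = u' ++ a :: u'' → a ∉ u'' →
      sideR u [a] = 1 + sideR u' (a :: u'')) :=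
  stmt4_general u t a
end

section
/- For all words u, v over a nonempty finite alphabet A and all letters a, b: r(u·a·v, b) ≤ 1 + r(u·v, b) and ℓ(b, u·a·v) ≤ 1 + ℓ(b, u·v). -/
/-!
Deleting a letter `a` from `u·a·v` costs at most one level of Simon's congruence against appending `b`.
If `t·b ⊑ u·v·b` with `|t| < m`, split `t = t₁·t₂` with `t₁` the longest prefix of `t` embedding in
`u`, so that `t₂ ⊑ v`. Then `t₁·a·t₂·b ⊑ u·a·v·b` has length `≤ m + 1`, hence embeds in `u·a·v`.
Wherever that embedding places the inserted `a`, it yields `t₁·t₂·b ⊑ u·v`, except when the letter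
after `t₁` lands in `u`, which maximality of `t₁` allows only for the final `b`.
The bound for `ℓ` is the bound for `r` applied to the reversed words.
-/

namespace List

variable {α : Type*}

theorem Sublist.exists_append_maximal {t u v : List α} (h : t <+ u ++ v) :
    ∃ t₁ t₂, t = t₁ ++ t₂ ∧ t₁ <+ u ∧ t₂ <+ v ∧ ∀ c r, t₂ = c :: r → ¬ t₁ ++ [c] <+ u := by
  obtain ⟨p₁, p₂, rfl, h₁, h₂⟩ := sublist_append_iff.mp h
  clear h
  induction p₂ generalizing p₁ with
  | nil => exact ⟨p₁, [], rfl, h₁, h₂, by simp⟩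
  | cons c r ih =>
    by_cases hc : p₁ ++ [c] <+ u
    · obtain ⟨t₁, t₂, he, ht⟩ := ih (p₁ ++ [c]) hc ((sublist_cons_self c r).trans h₂)
      exact ⟨t₁, t₂, by simpa using he, ht⟩
    · exact ⟨p₁, c :: r, rfl, h₁, h₂, by rintro _ _ ⟨rfl, rfl⟩; exact hc⟩

theorem append_sublist_append_or_of_append_cons_sublist {t x u v : List α} {a : α}
    (ht : t <+ u) (h : t ++ a :: x <+ u ++ a :: v) :
    t ++ x <+ u ++ v ∨ ∃ c r, x = c :: r ∧ t ++ [c] <+ u := by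
  obtain ⟨w₁, w₂, hw, hw₁, hw₂⟩ := sublist_append_iff.mp h
  rcases append_eq_append_iff.mp hw with ⟨y, rfl, hx⟩ | ⟨y, rfl, rfl⟩
  · rcases y with _ | ⟨a', _ | ⟨c, y⟩⟩
    · obtain rfl : w₂ = a :: x := by simpa using hx.symm
      exact .inl (ht.append (cons_sublist_cons.mp hw₂))
    · obtain ⟨rfl, rfl⟩ : a = a' ∧ x = w₂ := by simpa using hx
      rcases sublist_cons_iff.mp hw₂ with hx | ⟨r, rfl, hr⟩
      · exact .inl (ht.append hx)
      · exact .inl (by simpa using hw₁.append hr)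
    · obtain ⟨rfl, rfl⟩ : a = a' ∧ x = c :: (y ++ w₂) := by simpa using hx
      refine .inr ⟨c, _, rfl, Sublist.trans ?_ hw₁⟩
      simp
  · exact .inl (ht.append (cons_sublist_cons.mp ((sublist_append_right y _).trans hw₂)))

end List

open List

section

variable {A : Type*}

theorem SimonCong.symm {k : ℕ} {u v : List A} (h : SimonCong k u v) :
    SimonCong k v u :=
  fun s hs => (h s hs).symm

theorem SimonCong.reverse {k : ℕ} {u v : List A} (h : SimonCong k u v) :
    SimonCong k u.reverse v.reverse := by
  intro s hs
  rw [← reverse_sublist, reverse_reverse, ← reverse_sublist (l₂ := v.reverse), reverse_reverse]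
  exact h s.reverse (by simpa using hs)

theorem SimonCong.erase_middle {m : ℕ} {u v : List A} {a b : A}
    (h : SimonCong (m + 1) (u ++ a :: v) (u ++ a :: v ++ [b])) :
    SimonCong m (u ++ v) (u ++ v ++ [b]) := by
  intro s hs
  refine ⟨fun hs' => hs'.trans (sublist_append_left _ _), fun hs' => ?_⟩
  obtain ⟨t, x, rfl, ht, hx⟩ := sublist_append_iff.mp hs'
  rcases sublist_singleton.mp hx with rfl | rfl
  · simpa using ht
  obtain ⟨t₁, t₂, rfl, ht₁, ht₂, hmax⟩ := ht.exists_append_maximal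
  have hlen : (t₁ ++ a :: (t₂ ++ [b])).length ≤ m + 1 := by simp at hs ⊢; omega
  have hins : t₁ ++ a :: (t₂ ++ [b]) <+ u ++ a :: v :=
    (h _ hlen).mpr (by simpa using ht₁.append ((ht₂.append (Sublist.refl [b])).cons_cons a))
  rcases append_sublist_append_or_of_append_cons_sublist ht₁ hins with hs | ⟨c, r, hcr, hc⟩
  · simpa using hs
  · cases t₂ with
    | nil =>
      obtain ⟨rfl, rfl⟩ : b = c ∧ [] = r := by simpa using hcr
      simpa using hc.trans (sublist_append_left u v)
    | cons c' r' =>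
      obtain ⟨rfl, -⟩ : c' = c ∧ r' ++ [b] = r := by simpa using hcr
      exact absurd hc (hmax _ _ rfl)

theorem le_delta {k : ℕ} {u v : List A} (h : SimonCong k u v) :
    (k : ℕ∞) ≤ delta u v :=
  le_iSup₂ (f := fun (k : ℕ) (_ : k ∈ {k : ℕ | SimonCong k u v}) => (k : ℕ∞)) k h

theorem delta_mono {u v u' v' : List A}
    (h : ∀ k, SimonCong k u v → SimonCong k u' v') : delta u v ≤ delta u' v' :=
  iSup₂_le fun k hk => le_delta (h k hk)

theorem delta_le_one_add {u v u' v' : List A}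
    (h : ∀ m, SimonCong (m + 1) u v → SimonCong m u' v') : delta u v ≤ 1 + delta u' v' := by
  refine iSup₂_le fun k hk => ?_
  cases k with
  | zero => exact zero_le
  | succ m =>
    calc ((m + 1 : ℕ) : ℕ∞) = 1 + m := by push_cast; ring
      _ ≤ 1 + delta u' v' := add_le_add_right (le_delta (h m hk)) 1

theorem delta_comm (u v : List A) : delta u v = delta v u :=
  le_antisymm (delta_mono fun _ => SimonCong.symm) (delta_mono fun _ => SimonCong.symm)

theorem delta_reverse (u v : List A) : delta u.reverse v.reverse = delta u v :=
  le_antisymm (delta_mono fun _ h => by simpa using h.reverse)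
    (delta_mono fun _ => SimonCong.reverse)

theorem sideL_singleton_eq_sideR_reverse (b : A) (w : List A) :
    sideL [b] w = sideR w.reverse [b] := by
  rw [sideL, sideR, ← delta_reverse, delta_comm]
  simp

theorem sideR_append_cons_le (u v : List A) (a b : A) :
    sideR (u ++ a :: v) [b] ≤ 1 + sideR (u ++ v) [b] :=
  delta_le_one_add fun _ => SimonCong.erase_middle

end

theorem stmt8_general {A : Type*} (u v : List A) (a b : A) :
    sideR (u ++ a :: v) [b] ≤ 1 + sideR (u ++ v) [b] ∧
    sideL [b] (u ++ a :: v) ≤ 1 + sideL [b] (u ++ v) := by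
  refine ⟨sideR_append_cons_le u v a b, ?_⟩
  rw [sideL_singleton_eq_sideR_reverse, sideL_singleton_eq_sideR_reverse]
  simpa using sideR_append_cons_le v.reverse u.reverse a b

theorem stmt8 {A : Type*} [Fintype A] [Nonempty A] (u v : List A) (a b : A) :
    sideR (u ++ a :: v) [b] ≤ 1 + sideR (u ++ v) [b] ∧
    sideL [b] (u ++ a :: v) ≤ 1 + sideL [b] (u ++ v) :=
  stmt8_general u v a b
end
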